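/- arXiv:2307.02107 — 5 statements merged into one kernel-verified Lean document; each statement's English description precedes it below -/
import Mathlib

section
/- If a connected graph G has an independent cutset S, then every independent set S' of G with S ⊆ S' is also a cutset of G. -/
variable {V : Type*}

/-- `S` is an independent set of `G`. -/
def IsIndep (G : SimpleGraph V) (S : Set V) : Prop :=
  ∀ ⦃u⦄, u ∈ S → ∀ ⦃v⦄, v ∈ S → ¬ G.Adj u v

/-- `S` is a cutset of `G`: deleting `S` leaves a disconnected graph. -/
def IsCutset (G : SimpleGraph V) (S : Set V) : Prop :=
  ¬ (G.induce (Sᶜ : Set V)).Preconnected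

lemma aux_step (G : SimpleGraph V) (hG : G.Connected) {S S' : Set V}
    (hS'i : IsIndep G S') (hsub : S ⊆ S')
    (a b : V) (ha : a ∉ S) (hab : a ≠ b) :
    ∃ a' : V, ∃ ha' : a' ∉ S, a' ∉ S' ∧
      (G.induce (Sᶜ : Set V)).Reachable ⟨a, ha⟩ ⟨a', ha'⟩ := by
  by_cases h : a ∈ S'
  · obtain ⟨p⟩ := hG a b
    cases p with
    | nil => exact absurd rfl hab
    | @cons _ w _ hadj q =>
      have hwS' : w ∉ S' := fun hw => hS'i h hw hadj
      have hwS : w ∉ S := fun hw => hwS' (hsub hw)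
      exact ⟨w, hwS, hwS', SimpleGraph.Adj.reachable hadj⟩
  · exact ⟨a, ha, h, SimpleGraph.Reachable.refl _⟩

theorem stmt_0 [Fintype V] (G : SimpleGraph V) (hG : G.Connected)
    (S S' : Set V) (hSi : IsIndep G S) (hSc : IsCutset G S)
    (hS'i : IsIndep G S') (hsub : S ⊆ S') :
    IsCutset G S' := by
  intro hpre
  apply hSc
  intro u v
  by_cases huv : (u : V) = v
  · exact Subtype.ext huv ▸ SimpleGraph.Reachable.refl _
  · obtain ⟨u', hu'S, hu'S', hru⟩ :=
      aux_step G hG hS'i hsub u v u.2 huv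
    obtain ⟨v', hv'S, hv'S', hrv⟩ :=
      aux_step G hG hS'i hsub v u v.2 (fun h => huv h.symm)
    have hmid : (G.induce (S'ᶜ : Set V)).Reachable ⟨u', hu'S'⟩ ⟨v', hv'S'⟩ := hpre _ _
    let f : G.induce (S'ᶜ : Set V) →g G.induce (Sᶜ : Set V) :=
      ⟨fun x => ⟨x.1, fun hx => x.2 (hsub hx)⟩, fun h => h⟩
    have hmid' : (G.induce (Sᶜ : Set V)).Reachable ⟨u', hu'S⟩ ⟨v', hv'S⟩ :=
      hmid.map f
    have hu : ((⟨u.1, u.2⟩ : (Sᶜ : Set V)) = u) := rfl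
    exact ((hru.trans hmid').trans hrv.symm)
end

section
/- Let G be a connected graph whose vertex set is partitioned into disjoint nonempty sets A, B and disjoint sets N_A, N_B such that A ∪ B is independent, N(A) = N_A and N(B) = N_B. If S ⊆ N_A ∪ N_B is an independent cutset separating A and B, then for every connected component K of the bipartite subgraph H induced by the edges between N_A and N_B, either K ∩ S = K ∩ N_A or K ∩ S = K ∩ N_B. -/
variable {V : Type*}

def ReachAvoid (G : SimpleGraph V) (S : Set V) (u w : V) : Prop :=
  ∃ p : G.Walk u w, ∀ x ∈ p.support, x ∉ S

theorem stmt_3 [Fintype V] (G : SimpleGraph V) (hG : G.Connected)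
    (A B NA NB : Set V)
    (hpart : A ∪ B ∪ NA ∪ NB = Set.univ)
    (hAB : Disjoint A B) (hANA : Disjoint A NA) (hANB : Disjoint A NB)
    (hBNA : Disjoint B NA) (hBNB : Disjoint B NB) (hNANB : Disjoint NA NB)
    (hAne : A.Nonempty) (hBne : B.Nonempty)
    (hABind : IsIndep G (A ∪ B))
    (hNA : {v | ∃ a ∈ A, G.Adj a v} = NA)
    (hNB : {v | ∃ b ∈ B, G.Adj b v} = NB)
    -- `H` is the bipartite subgraph of the edges between `NA` and `NB`
    (H : SimpleGraph V)
    (hH : H = SimpleGraph.fromRel (fun u v => G.Adj u v ∧ u ∈ NA ∧ v ∈ NB))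
    (S : Set V) (hS : S ⊆ NA ∪ NB) (hSi : IsIndep G S)
    (hsep : ∀ a ∈ A \ S, ∀ b ∈ B \ S, ¬ ReachAvoid G S a b)
    (c : H.ConnectedComponent) :
    c.supp ∩ S = c.supp ∩ NA ∨ c.supp ∩ S = c.supp ∩ NB := by
  have key : ∀ u v, G.Adj u v → u ∈ NA → v ∈ NB → ((u ∈ S ∧ v ∉ S) ∨ (u ∉ S ∧ v ∈ S)) := by
    intro u v huv hu hv
    by_cases hus : u ∈ S
    · exact Or.inl ⟨hus, fun hvs => hSi hus hvs huv⟩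
    · refine Or.inr ⟨hus, ?_⟩
      by_contra hvs
      obtain ⟨a, ha, hau⟩ : ∃ a ∈ A, G.Adj a u := by rw [← hNA] at hu; exact hu
      obtain ⟨b, hb, hbv⟩ : ∃ b ∈ B, G.Adj b v := by rw [← hNB] at hv; exact hv
      have haS : a ∉ S := fun h => (hS h).elim
        (fun h' => Set.disjoint_left.mp hANA ha h')
        (fun h' => Set.disjoint_left.mp hANB ha h')
      have hbS : b ∉ S := fun h => (hS h).elim
        (fun h' => Set.disjoint_left.mp hBNA hb h')
        (fun h' => Set.disjoint_left.mp hBNB hb h')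
      refine hsep a ⟨ha, haS⟩ b ⟨hb, hbS⟩
        ⟨SimpleGraph.Walk.cons hau (SimpleGraph.Walk.cons huv
          (SimpleGraph.Walk.cons hbv.symm SimpleGraph.Walk.nil)), ?_⟩
      intro x hx
      simp only [SimpleGraph.Walk.support_cons, SimpleGraph.Walk.support_nil,
        List.mem_cons, List.mem_singleton, List.not_mem_nil, or_false] at hx
      rcases hx with rfl | rfl | rfl | rfl
      · exact haS
      · exact hus
      · exact hvs
      · exact hbS
  have hP : ∀ u v, H.Adj u v → ((u ∈ S ↔ u ∈ NA) ↔ (v ∈ S ↔ v ∈ NA)) := by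
    intro u v huv
    rw [hH, SimpleGraph.fromRel_adj] at huv
    obtain ⟨hne, h | h⟩ := huv
    · obtain ⟨hadj, hu, hv⟩ := h
      have hvNA : v ∉ NA := fun hh => Set.disjoint_left.mp hNANB hh hv
      rcases key u v hadj hu hv with ⟨h1, h2⟩ | ⟨h1, h2⟩ <;> tauto
    · obtain ⟨hadj, hv, hu⟩ := h
      have huNA : u ∉ NA := fun hh => Set.disjoint_left.mp hNANB hh hu
      rcases key v u hadj hv hu with ⟨h1, h2⟩ | ⟨h1, h2⟩ <;> tauto
  have hPcomp : ∀ u v : V, H.Reachable u v → ((u ∈ S ↔ u ∈ NA) ↔ (v ∈ S ↔ v ∈ NA)) := by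
    intro u v hr
    obtain ⟨p⟩ := hr
    induction p with
    | nil => exact Iff.rfl
    | cons h p ih => exact (hP _ _ h).trans ih
  obtain ⟨w, hw⟩ := c.exists_rep
  by_cases hwP : w ∈ S ↔ w ∈ NA
  · left
    ext x
    simp only [Set.mem_inter_iff, SimpleGraph.ConnectedComponent.mem_supp_iff]
    constructor
    · rintro ⟨hx, hxS⟩
      have hr : H.Reachable x w := SimpleGraph.ConnectedComponent.exact (hx.trans hw.symm)
      exact ⟨hx, ((hPcomp x w hr).mpr hwP).mp hxS⟩
    · rintro ⟨hx, hxNA⟩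
      have hr : H.Reachable x w := SimpleGraph.ConnectedComponent.exact (hx.trans hw.symm)
      exact ⟨hx, ((hPcomp x w hr).mpr hwP).mpr hxNA⟩
  · right
    ext x
    simp only [Set.mem_inter_iff, SimpleGraph.ConnectedComponent.mem_supp_iff]
    constructor
    · rintro ⟨hx, hxS⟩
      have hr : H.Reachable x w := SimpleGraph.ConnectedComponent.exact (hx.trans hw.symm)
      have hxP : ¬ (x ∈ S ↔ x ∈ NA) := fun hh => hwP ((hPcomp x w hr).mp hh)
      rcases hS hxS with h | h
      · exact absurd (iff_of_true hxS h) hxP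
      · exact ⟨hx, h⟩
    · rintro ⟨hx, hxNB⟩
      have hr : H.Reachable x w := SimpleGraph.ConnectedComponent.exact (hx.trans hw.symm)
      have hxP : ¬ (x ∈ S ↔ x ∈ NA) := fun hh => hwP ((hPcomp x w hr).mp hh)
      have hxNA : x ∉ NA := fun hh => Set.disjoint_left.mp hNANB hh hxNB
      exact ⟨hx, by tauto⟩
end

section
/- Let G be a connected graph whose vertex set is partitioned into nonempty A, B and sets N_A, N_B with A ∪ B independent, N(A) = N_A, N(B) = N_B. Let H be the bipartite graph of edges between N_A and N_B with components K₁,…,K_r, and let N_{A,i} = K_i ∩ N_A, N_{B,i} = K_i ∩ N_B. Suppose there is a choice function choosing for each i either N_{A,i} or N_{B,i} such that: (a) whenever G[N_{A,i}] has an edge, N_{A,i} is not chosen; (b) whenever G[N_{B,i}] has an edge, N_{B,i} is not chosen; (c) for i ≠ j, if there is an edge between N_{A,i} and N_{A,j} then not both N_{A,i} and N_{A,j} are chosen; (d) analogously for the B-sides. Then the union S of the chosen sets is an independent cutset of G separating A and B. -/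
variable {V : Type*}

theorem stmt_4 [Fintype V] (G : SimpleGraph V) (hG : G.Connected)
    (A B NA NB : Set V)
    (hpart : A ∪ B ∪ NA ∪ NB = Set.univ)
    (hAB : Disjoint A B) (hANA : Disjoint A NA) (hANB : Disjoint A NB)
    (hBNA : Disjoint B NA) (hBNB : Disjoint B NB) (hNANB : Disjoint NA NB)
    (hAne : A.Nonempty) (hBne : B.Nonempty)
    (hABind : IsIndep G (A ∪ B))
    (hNA : {v | ∃ a ∈ A, G.Adj a v} = NA)
    (hNB : {v | ∃ b ∈ B, G.Adj b v} = NB)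
    -- `H` is the bipartite subgraph of the edges between `NA` and `NB`
    (H : SimpleGraph V)
    (hH : H = SimpleGraph.fromRel (fun u v => G.Adj u v ∧ u ∈ NA ∧ v ∈ NB))
    -- the choice function: `σ c = false` means `N_{A,c}` is chosen,
    -- `σ c = true` means `N_{B,c}` is chosen
    (σ : H.ConnectedComponent → Bool)
    (ha : ∀ c : H.ConnectedComponent,
      (∃ u ∈ c.supp ∩ NA, ∃ v ∈ c.supp ∩ NA, G.Adj u v) → σ c = true)
    (hb : ∀ c : H.ConnectedComponent,
      (∃ u ∈ c.supp ∩ NB, ∃ v ∈ c.supp ∩ NB, G.Adj u v) → σ c = false)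
    (hc : ∀ c d : H.ConnectedComponent, c ≠ d →
      (∃ u ∈ c.supp ∩ NA, ∃ v ∈ d.supp ∩ NA, G.Adj u v) → (σ c = true ∨ σ d = true))
    (hd : ∀ c d : H.ConnectedComponent, c ≠ d →
      (∃ u ∈ c.supp ∩ NB, ∃ v ∈ d.supp ∩ NB, G.Adj u v) → (σ c = false ∨ σ d = false))
    (S : Set V)
    (hSdef : S = {v | (v ∈ NA ∧ σ (H.connectedComponentMk v) = false) ∨
                      (v ∈ NB ∧ σ (H.connectedComponentMk v) = true)}) :
    IsIndep G S ∧ IsCutset G S ∧ ∀ a ∈ A \ S, ∀ b ∈ B \ S, ¬ ReachAvoid G S a b := by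
  -- membership facts about S
  have hS_sub : S ⊆ NA ∪ NB := by
    intro v hv; rw [hSdef] at hv
    rcases hv with ⟨h, _⟩ | ⟨h, _⟩
    · exact Or.inl h
    · exact Or.inr h
  have hinS_NA : ∀ {v}, v ∈ S → v ∈ NA → σ (H.connectedComponentMk v) = false := by
    intro v hv hvNA; rw [hSdef] at hv
    rcases hv with ⟨_, h⟩ | ⟨h, _⟩
    · exact h
    · exact absurd rfl (hNANB.ne_of_mem hvNA h)
  have hinS_NB : ∀ {v}, v ∈ S → v ∈ NB → σ (H.connectedComponentMk v) = true := by
    intro v hv hvNB; rw [hSdef] at hv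
    rcases hv with ⟨h, _⟩ | ⟨_, h⟩
    · exact absurd rfl (hNANB.ne_of_mem h hvNB)
    · exact h
  have hnotS_NA : ∀ {v}, v ∈ NA → v ∉ S → σ (H.connectedComponentMk v) = true := by
    intro v hvNA hv
    cases hσ : σ (H.connectedComponentMk v) with
    | true => rfl
    | false => exact absurd (by rw [hSdef]; exact Or.inl ⟨hvNA, hσ⟩) hv
  have hnotS_NB : ∀ {v}, v ∈ NB → v ∉ S → σ (H.connectedComponentMk v) = false := by
    intro v hvNB hv
    cases hσ : σ (H.connectedComponentMk v) with
    | false => rfl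
    | true => exact absurd (by rw [hSdef]; exact Or.inr ⟨hvNB, hσ⟩) hv
  -- edges between NA and NB are H-edges, so same component
  have hHadj : ∀ {u v}, G.Adj u v → u ∈ NA → v ∈ NB →
      H.connectedComponentMk u = H.connectedComponentMk v := by
    intro u v huv hu hv
    have hne : u ≠ v := fun h => (hNANB.ne_of_mem hu (h ▸ hv)) rfl
    have : H.Adj u v := by
      rw [hH, SimpleGraph.fromRel_adj]
      exact ⟨hne, Or.inl ⟨huv, hu, hv⟩⟩
    exact SimpleGraph.ConnectedComponent.sound this.reachable
  have hmemsupp : ∀ v : V, v ∈ (H.connectedComponentMk v).supp := by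
    intro v; rw [SimpleGraph.ConnectedComponent.mem_supp_iff]
  -- independence of S
  have hindep : IsIndep G S := by
    intro u hu v hv huv
    rcases hS_sub hu with huA | huB <;> rcases hS_sub hv with hvA | hvB
    · -- both in NA
      by_cases hcd : H.connectedComponentMk u = H.connectedComponentMk v
      · have := ha (H.connectedComponentMk u)
          ⟨u, ⟨hmemsupp u, huA⟩, v, ⟨hcd ▸ hmemsupp v, hvA⟩, huv⟩
        rw [hinS_NA hu huA] at this; exact Bool.false_ne_true this
      · rcases hc _ _ hcd ⟨u, ⟨hmemsupp u, huA⟩, v, ⟨hmemsupp v, hvA⟩, huv⟩ with h | h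
        · rw [hinS_NA hu huA] at h; exact Bool.false_ne_true h
        · rw [hinS_NA hv hvA] at h; exact Bool.false_ne_true h
    · -- u ∈ NA, v ∈ NB
      have hcomp := hHadj huv huA hvB
      have h1 := hinS_NA hu huA
      have h2 := hinS_NB hv hvB
      rw [hcomp, h2] at h1; simp at h1
    · -- u ∈ NB, v ∈ NA
      have hcomp := hHadj huv.symm hvA huB
      have h1 := hinS_NB hu huB
      have h2 := hinS_NA hv hvA
      rw [hcomp, h1] at h2; simp at h2
    · -- both in NB
      by_cases hcd : H.connectedComponentMk u = H.connectedComponentMk v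
      · have := hb (H.connectedComponentMk u)
          ⟨u, ⟨hmemsupp u, huB⟩, v, ⟨hcd ▸ hmemsupp v, hvB⟩, huv⟩
        rw [hinS_NB hu huB] at this; simp at this
      · rcases hd _ _ hcd ⟨u, ⟨hmemsupp u, huB⟩, v, ⟨hmemsupp v, hvB⟩, huv⟩ with h | h
        · rw [hinS_NB hu huB] at h; simp at h
        · rw [hinS_NB hv hvB] at h; simp at h
  -- main invariant: walks avoiding S starting in A ∪ NA stay in A ∪ NA
  have main : ∀ {u w : V} (p : G.Walk u w), (∀ x ∈ p.support, x ∉ S) →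
      u ∈ A ∪ NA → w ∈ A ∪ NA := by
    intro u w p
    induction p with
    | nil => exact fun _ h => h
    | @cons u v w h p ih =>
      intro hsup hu
      have huS : u ∉ S := hsup u (by simp)
      have hvS : v ∉ S := hsup v (by simp)
      apply ih (fun x hx => hsup x (by simp [hx]))
      rcases hu with huA | huNA
      · -- u ∈ A, so v ∈ NA
        right; rw [← hNA]; exact ⟨u, huA, h⟩
      · -- u ∈ NA
        have hv : v ∈ A ∪ B ∪ NA ∪ NB := hpart ▸ Set.mem_univ v
        rcases hv with ((hvA | hvB) | hvNA) | hvNB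
        · exact Or.inl hvA
        · -- v ∈ B would put u ∈ NB, contradiction
          have : u ∈ NB := by rw [← hNB]; exact ⟨v, hvB, h.symm⟩
          exact absurd rfl (hNANB.ne_of_mem huNA this)
        · exact Or.inr hvNA
        · -- v ∈ NB: crossing contradiction
          have hcomp := hHadj h huNA hvNB
          have h1 := hnotS_NA huNA huS
          have h2 := hnotS_NB hvNB hvS
          rw [hcomp, h2] at h1; exact absurd h1 Bool.false_ne_true
  -- the separation property
  have hsep : ∀ a ∈ A \ S, ∀ b ∈ B \ S, ¬ ReachAvoid G S a b := by
    rintro a ⟨haA, -⟩ b ⟨hbB, -⟩ ⟨p, hp⟩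
    have := main p hp (Or.inl haA)
    rcases this with h | h
    · exact (hAB.ne_of_mem h hbB) rfl
    · exact (hBNA.ne_of_mem hbB h) rfl
  refine ⟨hindep, ?_, hsep⟩
  -- cutset
  intro hpre
  obtain ⟨a, haA⟩ := hAne
  obtain ⟨b, hbB⟩ := hBne
  have haS : a ∉ S := fun h => by
    rcases hS_sub h with h' | h'
    · exact (hANA.ne_of_mem haA h') rfl
    · exact (hANB.ne_of_mem haA h') rfl
  have hbS : b ∉ S := fun h => by
    rcases hS_sub h with h' | h'
    · exact (hBNA.ne_of_mem hbB h') rfl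
    · exact (hBNB.ne_of_mem hbB h') rfl
  obtain ⟨q⟩ := hpre ⟨a, haS⟩ ⟨b, hbS⟩
  refine hsep a ⟨haA, haS⟩ b ⟨hbB, hbS⟩
    ⟨q.map (SimpleGraph.Embedding.induce (Sᶜ : Set V)).toHom, ?_⟩
  intro x hx
  change x ∈ @SimpleGraph.Walk.support V G _ _ (q.map (SimpleGraph.Embedding.induce (Sᶜ : Set V)).toHom) at hx
  rw [SimpleGraph.Walk.support_map, List.mem_map] at hx
  obtain ⟨⟨y, hy⟩, -, rfl⟩ := hx
  exact hy
end

section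
/- If every vertex of a graph G lies in a triangle and X is an odd cycle transversal of G (i.e., G − X is bipartite), then X is a dominating set of G. -/
variable {V : Type*}

def IsDominating (G : SimpleGraph V) (X : Set V) : Prop :=
  ∀ v, v ∈ X ∨ ∃ x ∈ X, G.Adj v x

theorem stmt_13 [Fintype V] (G : SimpleGraph V)
    (htri : ∀ v : V, ∃ a b : V, G.Adj v a ∧ G.Adj v b ∧ G.Adj a b)
    (X : Set V)
    -- `G - X` is bipartite: it admits a proper 2-coloring
    (hbip : ∃ f : V → Bool, ∀ u v : V, u ∉ X → v ∉ X → G.Adj u v → f u ≠ f v) :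
    IsDominating G X := by
  obtain ⟨f, hf⟩ := hbip
  intro v
  by_cases hv : v ∈ X
  · exact Or.inl hv
  obtain ⟨a, b, hva, hvb, hab⟩ := htri v
  by_cases ha : a ∈ X
  · exact Or.inr ⟨a, ha, hva⟩
  by_cases hb : b ∈ X
  · exact Or.inr ⟨b, hb, hvb⟩
  exfalso
  have h1 := hf v a hv ha hva
  have h2 := hf v b hv hb hvb
  have h3 := hf a b ha hb hab
  revert h1 h2 h3
  cases f v <;> cases f a <;> cases f b <;> simp
end

section
/- Let G be a connected graph, X a dominating set of G, and S* an independent cutset of G such that X \ S* lies in at most one component of G − S*. Let X' = X ∩ S*, A = X \ X', F = N(X') \ A, and let B be the set of vertices not in a component of G − (X' ∪ I) containing a vertex of A, where I = N(A) \ (X' ∪ F). Then B is nonempty and B ⊆ F. -/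
variable {V : Type*}

/-- The (open) neighborhood of a set `S` in `G`. -/
def Nbd (G : SimpleGraph V) (S : Set V) : Set V :=
  {v | v ∉ S ∧ ∃ x ∈ S, G.Adj x v}

lemma ReachAvoid.symm {G : SimpleGraph V} {S : Set V} {u w : V}
    (h : ReachAvoid G S u w) : ReachAvoid G S w u := by
  obtain ⟨p, hp⟩ := h
  exact ⟨p.reverse, fun x hx => hp x (by simpa using hx)⟩

lemma ReachAvoid.trans {G : SimpleGraph V} {S : Set V} {u v w : V}
    (h1 : ReachAvoid G S u v) (h2 : ReachAvoid G S v w) : ReachAvoid G S u w := by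
  obtain ⟨p, hp⟩ := h1; obtain ⟨q, hq⟩ := h2
  refine ⟨p.append q, fun x hx => ?_⟩
  rcases (SimpleGraph.Walk.mem_support_append_iff _ _).1 hx with h | h
  · exact hp x h
  · exact hq x h

lemma ReachAvoid.mono {G : SimpleGraph V} {S T : Set V} {u w : V}
    (hST : S ⊆ T) (h : ReachAvoid G T u w) : ReachAvoid G S u w := by
  obtain ⟨p, hp⟩ := h
  exact ⟨p, fun x hx hxS => hp x hx (hST hxS)⟩

lemma reachAvoid_induce {G : SimpleGraph V} {S : Set V} {u w : V}
    (h : ReachAvoid G S u w) (hu : u ∈ (Sᶜ : Set V)) (hw : w ∈ (Sᶜ : Set V)) :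
    (G.induce (Sᶜ : Set V)).Reachable ⟨u, hu⟩ ⟨w, hw⟩ := by
  obtain ⟨p, hp⟩ := h
  induction p with
  | nil => exact SimpleGraph.Reachable.refl _
  | @cons a b c hab p ih =>
      have hb : b ∈ (Sᶜ : Set V) := hp b (by simp)
      have : (G.induce (Sᶜ : Set V)).Adj ⟨a, hu⟩ ⟨b, hb⟩ := hab
      exact this.reachable.trans (ih hb hw (fun x hx => hp x (by simp [hx])))

lemma reachAvoid_adj {G : SimpleGraph V} {S : Set V} {u w : V}
    (h : G.Adj u w) (hu : u ∉ S) (hw : w ∉ S) : ReachAvoid G S u w := by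
  refine ⟨SimpleGraph.Walk.cons h SimpleGraph.Walk.nil, ?_⟩
  intro x hx
  simp only [SimpleGraph.Walk.support_cons, SimpleGraph.Walk.support_nil,
    List.mem_cons, List.mem_singleton] at hx
  rcases hx with rfl | rfl | h'
  · exact hu
  · exact hw
  · exact absurd h' (by simp)

theorem stmt_15 [Fintype V] (G : SimpleGraph V) (hG : G.Connected)
    (X Sstar : Set V) (hXdom : IsDominating G X)
    (hSi : IsIndep G Sstar) (hSc : IsCutset G Sstar)
    -- `X \ Sstar` is contained in at most one component of `G - Sstar`
    (hone : ∀ a ∈ X \ Sstar, ∀ b ∈ X \ Sstar, ReachAvoid G Sstar a b)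
    (hSX : ¬ Sstar ⊆ X) (hXS : ¬ X ⊆ Sstar)
    (X' A F I B : Set V)
    (hX' : X' = X ∩ Sstar)
    (hA : A = X \ X')
    (hF : F = Nbd G X' \ A)
    (hI : I = Nbd G A \ (X' ∪ F))
    -- `B` is the set of vertices of `G - (X' ∪ I)` lying in components
    -- containing no vertex of `A`
    (hB : B = {w | w ∉ X' ∪ I ∧ ∀ a ∈ A, ¬ ReachAvoid G (X' ∪ I) w a}) :
    B.Nonempty ∧ B ⊆ F := by
  -- A = X \ Sstar
  have hAeq : A = X \ Sstar := by
    ext x; rw [hA, hX']; simp [Set.mem_diff]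
  have hX'S : X' ⊆ Sstar := by rw [hX']; exact Set.inter_subset_right
  -- Sstar ⊆ X' ∪ I
  have hSsub : Sstar ⊆ X' ∪ I := by
    intro s hs
    by_cases hsX' : s ∈ X'
    · exact Or.inl hsX'
    have hsX : s ∉ X := fun h => hsX' (by rw [hX']; exact ⟨h, hs⟩)
    rcases hXdom s with h | ⟨x, hxX, hadj⟩
    · exact absurd h hsX
    have hxS : x ∉ Sstar := fun hxS => hSi hs hxS hadj
    have hxA : x ∈ A := by rw [hAeq]; exact ⟨hxX, hxS⟩
    have hsNbdA : s ∈ Nbd G A := ⟨fun h => hsX (hAeq ▸ h).1, x, hxA, hadj.symm⟩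
    have hsF : s ∉ F := by
      rw [hF]
      rintro ⟨⟨-, x', hx'X', hadj'⟩, -⟩
      exact hSi (hX'S hx'X') hs hadj'
    exact Or.inr (by rw [hI]; exact ⟨hsNbdA, by simp [hsX', hsF]⟩)
  -- a vertex of A
  obtain ⟨a, haX, haS⟩ : ∃ x, x ∈ X ∧ x ∉ Sstar := by
    rw [Set.not_subset] at hXS; exact hXS
  have haA : a ∈ A := by rw [hAeq]; exact ⟨haX, haS⟩
  -- generic membership in B
  have key : ∀ z, z ∉ Sstar → ¬ ReachAvoid G Sstar z a → z ∈ B := by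
    intro z hzS hza
    have hzX' : z ∉ X' := fun h => hzS (hX'S h)
    have hzI : z ∉ I := by
      rw [hI]
      rintro ⟨⟨hzA, x, hxA, hadj⟩, -⟩
      have hxS : x ∉ Sstar := (hAeq ▸ hxA).2
      exact hza ((reachAvoid_adj hadj.symm hzS hxS).trans
        (hone x (hAeq ▸ hxA) a (hAeq ▸ haA)))
    rw [hB]
    refine ⟨by simp [hzX', hzI], fun a' ha' h => ?_⟩
    exact hza ((ReachAvoid.mono hSsub h).trans (hone a' (hAeq ▸ ha') a (hAeq ▸ haA)))
  constructor
  · -- B is nonempty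
    unfold IsCutset SimpleGraph.Preconnected at hSc
    push_neg at hSc
    obtain ⟨⟨u, hu⟩, ⟨w, hw⟩, huw⟩ := hSc
    have hreach : ¬ ReachAvoid G Sstar u w := fun h => huw (reachAvoid_induce h hu hw)
    by_cases hua : ReachAvoid G Sstar u a
    · refine ⟨w, key w hw fun h => hreach (hua.trans h.symm)⟩
    · exact ⟨u, key u hu hua⟩
  · -- B ⊆ F
    intro w hwB
    rw [hB] at hwB
    obtain ⟨hw1, hw2⟩ := hwB
    have hwX' : w ∉ X' := fun h => hw1 (Or.inl h)
    have hwI : w ∉ I := fun h => hw1 (Or.inr h)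
    have hwA : w ∉ A := by
      intro hwA
      refine hw2 w hwA ⟨SimpleGraph.Walk.nil, fun x hx => ?_⟩
      simp only [SimpleGraph.Walk.support_nil, List.mem_singleton] at hx
      subst hx; exact hw1
    have hwX : w ∉ X := by
      intro hwX
      exact hwA (by rw [hA]; exact ⟨hwX, hwX'⟩)
    rcases hXdom w with h | ⟨x, hxX, hadj⟩
    · exact absurd h hwX
    by_cases hxX' : x ∈ X'
    · rw [hF]; exact ⟨⟨hwX', x, hxX', hadj.symm⟩, hwA⟩
    · have hxA : x ∈ A := by rw [hA]; exact ⟨hxX, hxX'⟩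
      have hwNbdA : w ∈ Nbd G A := ⟨hwA, x, hxA, hadj.symm⟩
      by_contra hwF
      exact hwI (by rw [hI]; exact ⟨hwNbdA, by simp [hwX', hwF]⟩)
end
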